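/- If a Turing machine T is bounded-zigzag (there exists N such that T makes no zigzag, left or right, of width greater than N), then the language of the trace subshift S_T = τ_T(X_T) ⊆ (Q × A)^ℕ is recognized by a deterministic pushdown automaton. -/

import Mathlib

/-- A Turing machine with tape alphabet `A`, state set `Q`, and rule
`δ : A × Q → A × Q × {-1,1}` (the direction is encoded by a `Bool`). -/
structure TuringMachine (A Q : Type*) where
  δ : A → Q → A × Q × Bool

namespace TuringMachine

variable {A Q : Type*}

/-- Direction of a move: `true ↦ +1`, `false ↦ -1`. -/
def dir (b : Bool) : ℤ := if b then 1 else -1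

/-- A configuration: tape contents, head state, head position. -/
abbrev Config (A Q : Type*) := (ℤ → A) × Q × ℤ

/-- One step of the machine on `X = A^ℤ × Q × ℤ`. -/
def step (M : TuringMachine A Q) (c : Config A Q) : Config A Q :=
  let r := M.δ (c.1 c.2.2) c.2.1
  (Function.update c.1 c.2.2 r.1, r.2.1, c.2.2 + dir r.2.2)

/-- Head position after `t` steps. -/
def pos (M : TuringMachine A Q) (t : ℕ) (c : Config A Q) : ℤ :=
  ((M.step)^[t] c).2.2

/-- `c` is preperiodic for the machine. -/
def Preperiodic (M : TuringMachine A Q) (c : Config A Q) : Prop :=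
  ∃ m p : ℕ, 0 < p ∧ (M.step)^[m + p] c = (M.step)^[m] c

end TuringMachine

namespace TuringMachine

/-- The trace word of a configuration: at each time, the symbol under the head
and the current state (the letters of the subshift S_T). -/
def trace {A Q : Type*} (M : TuringMachine A Q) (x : Config A Q) (t : ℕ) :
    A × Q :=
  let c := (M.step)^[t] x
  (c.1 c.2.2, c.2.1)

/-- The language of finite factors of the trace subshift S_T. -/
def langST {A Q : Type*} (M : TuringMachine A Q) : Language (A × Q) :=
  {w : List (A × Q) | ∃ (x : Config A Q) (m : ℕ),
    ∀ j : ℕ, ∀ hj : j < w.length, w.get ⟨j, hj⟩ = M.trace x (m + j)}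

end TuringMachine

/-- A deterministic pushdown automaton, following the paper: finite state set,
finite stack alphabet with a bottom symbol, a deterministic transition pushing
words of length at most 2, the bottom symbol being kept exactly at the bottom. -/
structure DPDA (α : Type*) where
  Ω : Type
  Γ : Type
  finΩ : Fintype Ω
  finΓ : Fintype Γ
  bot : Γ
  init : Ω
  final : Set Ω
  trans : α → Ω → Γ → Ω × List Γ
  len_le : ∀ a o β, (trans a o β).2.length ≤ 2
  bot_stays : ∀ a o, ∃ μ : List Γ, (trans a o bot).2 = μ ++ [bot] ∧ bot ∉ μ
  no_bot : ∀ a o β, β ≠ bot → bot ∉ (trans a o β).2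

namespace DPDA

variable {α : Type*} (P : DPDA α)

/-- One transition on a configuration (state, stack). -/
def stepConf (a : α) : P.Ω × List P.Γ → P.Ω × List P.Γ
  | (o, []) => (o, [])
  | (o, γ :: μ) => ((P.trans a o γ).1, (P.trans a o γ).2 ++ μ)

/-- Run the automaton on a word from a configuration. -/
def evalFrom (c : P.Ω × List P.Γ) (w : List α) : P.Ω × List P.Γ :=
  w.foldl (fun c a => P.stepConf a c) c

/-- The language recognized by the automaton: words whose run from the initial
state with stack reduced to the bottom symbol ends in a terminal state. -/
def accepts : Language α :=
  {w : List α | (P.evalFrom (P.init, [P.bot]) w).1 ∈ P.final}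

end DPDA

/-!
Bounded zigzags make the trace language regular, not merely deterministic context-free. Read a
candidate trace word letter by letter while simulating the head on a partially known tape: each
letter fixes the current state and the symbol under the head, and the rule of the machine then
fixes the next state, the symbol written and the move. The word is a factor of a trace exactly
when every letter agrees with what the simulation already knows; a cell reached for the first time
is unconstrained, because the initial tape can be changed there without affecting the earlier
trace. Once the head is more than `N` cells away from a cell it never comes back to it, so it
suffices to remember the cells within distance `N` of the head. This is a finite automaton, and a
finite automaton is a DPDA that leaves its stack alone.
-/

namespace DPDA

variable {α : Type*}

def ofDFA {σ : Type} [Fintype σ] (D : DFA α σ) : DPDA α where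
  Ω := σ
  Γ := Unit
  finΩ := inferInstance
  finΓ := inferInstance
  bot := ()
  init := D.start
  final := D.accept
  trans a o _ := (D.step o a, [()])
  len_le _ _ _ := by simp
  bot_stays _ _ := ⟨[], rfl, List.not_mem_nil⟩
  no_bot _ _ _ h := (h rfl).elim

theorem evalFrom_ofDFA {σ : Type} [Fintype σ] (D : DFA α σ) (s : σ) (w : List α) :
    (ofDFA D).evalFrom (s, [()]) w = (D.evalFrom s w, [()]) := by
  induction w generalizing s with
  | nil => rfl
  | cons a w ih => exact ih (D.step s a)

theorem accepts_ofDFA {σ : Type} [Fintype σ] (D : DFA α σ) : (ofDFA D).accepts = D.accepts := by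
  ext w
  change ((ofDFA D).evalFrom (D.start, [()]) w).1 ∈ D.accept ↔ _
  rw [evalFrom_ofDFA]
  rfl

end DPDA

theorem Language.IsRegular.exists_dpda_accepts_eq {α : Type*} {L : Language α}
    (h : L.IsRegular) : ∃ P : DPDA α, P.accepts = L := by
  obtain ⟨σ, _, D, rfl⟩ := h
  exact ⟨DPDA.ofDFA D, DPDA.accepts_ofDFA D⟩

theorem DFA.isRegular_accepts_of_finite_range_eval {α σ : Type*} (D : DFA α σ)
    (h : (Set.range D.eval).Finite) : D.accepts.IsRegular := by
  refine Language.IsRegular.of_finite_range_leftQuotient ?_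
  rw [Language.leftQuotient_accepts, Set.range_comp]
  exact h.image _

namespace TuringMachine

variable {A Q : Type*} (M : TuringMachine A Q)

def Realizes (x : Config A Q) (w : List (A × Q)) : Prop :=
  ∀ j (hj : j < w.length), w[j] = M.trace x j

theorem mem_langST_iff {w : List (A × Q)} : w ∈ M.langST ↔ ∃ x, M.Realizes x w := by
  constructor
  · rintro ⟨x, m, hx⟩
    refine ⟨M.step^[m] x, fun j hj => ?_⟩
    change w.get ⟨j, hj⟩ = _
    rw [hx j hj, trace, trace, add_comm, Function.iterate_add_apply]
  · rintro ⟨x, hx⟩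
    exact ⟨x, 0, fun j hj => by rw [zero_add]; exact hx j hj⟩

theorem realizes_nil (x : Config A Q) : M.Realizes x [] :=
  fun j hj => absurd hj (Nat.not_lt_zero j)

theorem realizes_append_singleton {x : Config A Q} {w : List (A × Q)} {c : A × Q} :
    M.Realizes x (w ++ [c]) ↔ M.Realizes x w ∧ M.trace x w.length = c := by
  constructor
  · intro h
    refine ⟨fun j hj => ?_, ?_⟩
    · rw [← h j (by simp; omega), List.getElem_append_left hj]
    · rw [← h w.length (by simp)]; simp
  · rintro ⟨hw, hc⟩ j hj
    rcases lt_or_eq_of_le (Nat.le_of_lt_succ (by simpa using hj)) with hj | rfl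
    · rw [List.getElem_append_left hj, hw j hj]
    · simp [hc]

theorem pos_iterate (x : Config A Q) (s t : ℕ) : M.pos t (M.step^[s] x) = M.pos (t + s) x := by
  rw [pos, pos, Function.iterate_add_apply]

theorem step_update_of_ne {c : Config A Q} {z : ℤ} (a : A) (hz : c.2.2 ≠ z) :
    M.step (Function.update c.1 z a, c.2) = (Function.update (M.step c).1 z a, (M.step c).2) := by
  simp only [step, Function.update_of_ne hz, Function.update_comm hz.symm]

theorem iterate_step_update_of_forall_ne {x : Config A Q} {z : ℤ} {n : ℕ} (a : A)
    (hz : ∀ t < n, M.pos t x ≠ z) {t : ℕ} (ht : t ≤ n) :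
    M.step^[t] (Function.update x.1 z a, x.2) =
      (Function.update (M.step^[t] x).1 z a, (M.step^[t] x).2) := by
  induction t with
  | zero => rfl
  | succ t ih =>
    rw [Function.iterate_succ_apply', Function.iterate_succ_apply', ih (by omega)]
    exact M.step_update_of_ne a (hz t (by omega))

def ZigzagBounded (N : ℕ) : Prop :=
  ∀ (x : Config A Q) (i : ℤ) (W t₁ t₂ : ℕ), N < W → 0 < t₁ → t₁ < t₂ → x.2.2 = i →
    (M.pos t₁ x = i + W ∨ M.pos t₁ x = i - W) → M.pos t₂ x ≠ i

def nextWindow (N : ℕ) (W : ℤ → Option A) (a : A) (d : ℤ) : ℤ → Option A :=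
  fun k => if N < |k| then none else if k + d = 0 then some a else W (k + d)

open Classical in
/-- `none` is the rejecting sink; `some (q?, W)` holds the next machine state once it is known and
the symbols known within distance `N` of the head, `W k` being the cell at offset `k`. Acceptance
also asks for a configuration to exist: without one there are no traces, not even `[]`. -/
noncomputable def windowDFA (N : ℕ) : DFA (A × Q) (Option (Option Q × (ℤ → Option A))) where
  step s c := s.bind fun p =>
    if (∀ q ∈ p.1, q = c.2) ∧ (∀ a ∈ p.2 0, a = c.1) then
      some (some (M.δ c.1 c.2).2.1, nextWindow N p.2 (M.δ c.1 c.2).1 (dir (M.δ c.1 c.2).2.2))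
    else none
  start := some (none, fun _ => none)
  accept := {s | s.isSome ∧ Nonempty (Config A Q)}

theorem windowDFA_step_some {N : ℕ} {p : Option Q × (ℤ → Option A)} {c : A × Q}
    (hq : ∀ q ∈ p.1, q = c.2) (ha : ∀ a ∈ p.2 0, a = c.1) :
    (M.windowDFA N).step (some p) c =
      some (some (M.δ c.1 c.2).2.1, nextWindow N p.2 (M.δ c.1 c.2).1 (dir (M.δ c.1 c.2).2.2)) :=
  if_pos ⟨hq, ha⟩

theorem compatible_of_windowDFA_step_ne_none {N : ℕ} {p : Option Q × (ℤ → Option A)}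
    {c : A × Q} (h : (M.windowDFA N).step (some p) c ≠ none) :
    (∀ q ∈ p.1, q = c.2) ∧ ∀ a ∈ p.2 0, a = c.1 := by
  by_contra hc
  exact h (if_neg hc)

theorem windowDFA_eval_eq_none_of_lt (N : ℕ) (w : List (A × Q)) :
    ∀ p ∈ (M.windowDFA N).eval w, ∀ k : ℤ, N < |k| → p.2 k = none := by
  rcases w.eq_nil_or_concat with rfl | ⟨w, c, rfl⟩
  · rintro p ⟨⟩ k -
    rfl
  · intro p hp k hk
    rw [List.concat_eq_append, DFA.eval_append_singleton] at hp
    rcases h : (M.windowDFA N).eval w with _ | p₀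
    · rw [h] at hp
      cases hp
    rw [h, Option.mem_def] at hp
    dsimp only [windowDFA, Option.bind] at hp
    split_ifs at hp
    cases hp
    exact if_pos hk

theorem finite_range_windowDFA_eval [Finite A] [Finite Q] (N : ℕ) :
    (Set.range (M.windowDFA N).eval).Finite := by
  let I := Set.Icc (-(N : ℤ)) N
  let extend (W : I → Option A) (k : ℤ) : Option A := if h : k ∈ I then W ⟨k, h⟩ else none
  refine (Set.finite_range (Option.map (Prod.map id extend))).subset ?_
  rintro _ ⟨w, rfl⟩
  rcases h : (M.windowDFA N).eval w with _ | p
  · exact ⟨none, rfl⟩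
  refine ⟨some (p.1, fun k => p.2 k), congrArg some (Prod.ext rfl (funext fun k => ?_))⟩
  by_cases hk : k ∈ I
  · exact dif_pos hk
  · refine (dif_neg hk).trans (M.windowDFA_eval_eq_none_of_lt N w p h k ?_).symm
    rwa [Set.mem_Icc, ← abs_le, not_le] at hk

structure Tracks (N : ℕ) (x : Config A Q) (n : ℕ) (p : Option Q × (ℤ → Option A)) : Prop where
  state_eq : ∀ q ∈ p.1, (M.step^[n] x).2.1 = q
  state_isSome : 0 < n → p.1.isSome
  tape_eq : ∀ k, ∀ a ∈ p.2 k, (M.step^[n] x).1 (M.pos n x + k) = a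
  isSome_of_near : ∀ m < n, (∀ t, m < t → t ≤ n → |M.pos t x - M.pos m x| ≤ N) →
    (p.2 (M.pos m x - M.pos n x)).isSome

theorem tracks_start (N : ℕ) (x : Config A Q) : M.Tracks N x 0 (none, fun _ => none) where
  state_eq _ h := by simp at h
  state_isSome h := absurd h (lt_irrefl 0)
  tape_eq _ _ h := by simp at h
  isSome_of_near _ h := absurd h (Nat.not_lt_zero _)

variable {M}

theorem Tracks.exists_step {N : ℕ} {x : Config A Q} {n : ℕ} {p : Option Q × (ℤ → Option A)}
    (hp : M.Tracks N x n p) :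
    ∃ p', (M.windowDFA N).step (some p) (M.trace x n) = some p' ∧ M.Tracks N x (n + 1) p' := by
  set c := M.step^[n] x
  have hposn : M.pos n x = c.2.2 := rfl
  have htape : ∀ k, ∀ a ∈ p.2 k, c.1 (c.2.2 + k) = a := hp.tape_eq
  rw [show M.trace x n = (c.1 c.2.2, c.2.1) from rfl]
  refine ⟨_, M.windowDFA_step_some (fun q hq => (hp.state_eq q hq).symm)
    (fun a ha => (add_zero c.2.2 ▸ htape 0 a ha).symm), ?_⟩
  dsimp only
  set r := M.δ (c.1 c.2.2) c.2.1
  have hstep : M.step^[n + 1] x = (Function.update c.1 c.2.2 r.1, r.2.1, c.2.2 + dir r.2.2) :=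
    Function.iterate_succ_apply' _ _ _
  have hpos : M.pos (n + 1) x = M.pos n x + dir r.2.2 := congrArg (·.2.2) hstep
  constructor
  · intro q hq
    rw [hstep, Option.mem_some_iff.mp hq]
  · exact fun _ => rfl
  · intro k a ha
    rw [hpos, hstep, hposn]
    dsimp only [nextWindow] at ha ⊢
    split_ifs at ha with hk hkd
    · simp at ha
    · rw [Option.mem_some_iff.mp ha, show c.2.2 + dir r.2.2 + k = c.2.2 by omega,
        Function.update_self]
    · rw [Function.update_of_ne (by omega), ← htape _ a ha]
      ring_nf
  · intro m hm hnear
    have hk : |M.pos m x - M.pos (n + 1) x| ≤ N := by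
      rw [abs_sub_comm]; exact hnear (n + 1) hm le_rfl
    rw [hpos] at hk ⊢
    dsimp only [nextWindow]
    rw [if_neg (not_lt.2 hk)]
    split_ifs with hkd
    · rfl
    · have hmn : m < n := lt_of_le_of_ne (Nat.le_of_lt_succ hm) (by rintro rfl; omega)
      rw [show M.pos m x - (M.pos n x + dir r.2.2) + dir r.2.2 = M.pos m x - M.pos n x by ring]
      exact hp.isSome_of_near m hmn fun t hmt htn => hnear t hmt (htn.trans n.le_succ)

theorem Realizes.exists_tracks {N : ℕ} {x : Config A Q} {w : List (A × Q)}
    (hx : M.Realizes x w) : ∃ p, (M.windowDFA N).eval w = some p ∧ M.Tracks N x w.length p := by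
  induction w using List.reverseRecOn with
  | nil => exact ⟨_, rfl, M.tracks_start N x⟩
  | append_singleton w c ih =>
    obtain ⟨hxw, rfl⟩ := (M.realizes_append_singleton).mp hx
    obtain ⟨p, hp, htr⟩ := ih hxw
    obtain ⟨p', hp', htr'⟩ := htr.exists_step
    exact ⟨p', by rw [DFA.eval_append_singleton, hp, hp'], by simpa using htr'⟩

theorem Realizes.append_singleton_of_forall_ne {x : Config A Q} {w : List (A × Q)} {c : A × Q}
    (hx : M.Realizes x w) (hc : (M.step^[w.length] x).2.1 = c.2)
    (hfresh : ∀ t < w.length, M.pos t x ≠ M.pos w.length x) :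
    M.Realizes (Function.update x.1 (M.pos w.length x) c.1, x.2) (w ++ [c]) := by
  have hiter := fun t => M.iterate_step_update_of_forall_ne (x := x) c.1 hfresh (t := t)
  refine (M.realizes_append_singleton).mpr ⟨fun j hj => ?_, ?_⟩
  · rw [hx j hj, trace, trace, hiter j hj.le]
    exact Prod.ext (Function.update_of_ne (hfresh j hj) _ _).symm rfl
  · rw [trace, hiter _ le_rfl]
    exact Prod.ext (Function.update_self _ _ _) hc

theorem ZigzagBounded.abs_pos_sub_le {N : ℕ} (hN : M.ZigzagBounded N)
    {x : Config A Q} {s t n : ℕ} (hst : s ≤ t) (htn : t ≤ n) (hret : M.pos n x = M.pos s x) :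
    |M.pos t x - M.pos s x| ≤ N := by
  by_contra! hfar
  have hts : s < t := lt_of_le_of_ne hst (by rintro rfl; simp at hfar; omega)
  have htn : t < n := lt_of_le_of_ne htn (by rintro rfl; simp [hret] at hfar; omega)
  have hW := Int.natCast_natAbs (M.pos t x - M.pos s x)
  refine hN (M.step^[s] x) (M.pos s x) (M.pos t x - M.pos s x).natAbs (t - s) (n - s)
    (by omega) (by omega) (by omega) rfl ?_ ?_
  · rw [pos_iterate, Nat.sub_add_cancel hst]
    rcases abs_choice (M.pos t x - M.pos s x) with h | h <;> [left; right] <;> omega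
  · rw [pos_iterate, Nat.sub_add_cancel (hst.trans htn.le), hret]

theorem ZigzagBounded.exists_realizes_append_singleton {N : ℕ} (hN : M.ZigzagBounded N)
    {x : Config A Q} {w : List (A × Q)} {p : Option Q × (ℤ → Option A)} {c : A × Q}
    (hx : M.Realizes x w) (hp : M.Tracks N x w.length p) (hw : w ≠ [])
    (hq : ∀ q ∈ p.1, q = c.2) (ha : ∀ a ∈ p.2 0, a = c.1) :
    ∃ x', M.Realizes x' (w ++ [c]) := by
  have hlen : 0 < w.length := List.length_pos_iff.mpr hw
  obtain ⟨q, hq'⟩ := Option.isSome_iff_exists.mp (hp.state_isSome hlen)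
  have hstate : (M.step^[w.length] x).2.1 = c.2 := (hp.state_eq q hq').trans (hq q hq')
  by_cases hfresh : ∀ t < w.length, M.pos t x ≠ M.pos w.length x
  · exact ⟨_, hx.append_singleton_of_forall_ne hstate hfresh⟩
  push Not at hfresh
  obtain ⟨m, hm, hret⟩ := hfresh
  -- the head is back on a cell it has visited, so bounded zigzags keep that cell in the window
  have hnear : (p.2 0).isSome := by
    simpa [hret] using hp.isSome_of_near m hm fun t hmt htn =>
      hN.abs_pos_sub_le hmt.le htn hret.symm
  obtain ⟨a, ha'⟩ := Option.isSome_iff_exists.mp hnear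
  refine ⟨x, (M.realizes_append_singleton).mpr ⟨hx, Prod.ext ?_ hstate⟩⟩
  exact (add_zero (M.pos w.length x) ▸ hp.tape_eq 0 a ha').trans (ha a ha')

theorem ZigzagBounded.exists_realizes {N : ℕ} (hN : M.ZigzagBounded N)
    [Nonempty (Config A Q)] {w : List (A × Q)} (hw : (M.windowDFA N).eval w ≠ none) :
    ∃ x, M.Realizes x w := by
  induction w using List.reverseRecOn with
  | nil => exact ⟨Classical.arbitrary _, M.realizes_nil _⟩
  | append_singleton w c ih =>
    rw [DFA.eval_append_singleton] at hw
    have hw' : (M.windowDFA N).eval w ≠ none := fun h => hw (by rw [h]; rfl)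
    obtain ⟨x, hx⟩ := ih hw'
    obtain ⟨p, hp, htr⟩ := hx.exists_tracks (N := N)
    rw [hp] at hw
    obtain ⟨hq, ha⟩ := M.compatible_of_windowDFA_step_ne_none hw
    rcases eq_or_ne w [] with rfl | hne
    · exact ⟨(fun _ => c.1, c.2, 0), (M.realizes_append_singleton).mpr ⟨M.realizes_nil _, rfl⟩⟩
    · exact hN.exists_realizes_append_singleton hx htr hne hq ha

theorem ZigzagBounded.langST_eq {N : ℕ} (hN : M.ZigzagBounded N) :
    M.langST = (M.windowDFA N).accepts := by
  ext w
  rw [mem_langST_iff, DFA.mem_accepts]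
  constructor
  · rintro ⟨x, hx⟩
    obtain ⟨p, hp, -⟩ := hx.exists_tracks (N := N)
    exact ⟨by simp [hp], ⟨x⟩⟩
  · rintro ⟨hw, _⟩
    exact hN.exists_realizes (Option.isSome_iff_ne_none.mp hw)

theorem ZigzagBounded.isRegular_langST [Finite A] [Finite Q] {N : ℕ} (hN : M.ZigzagBounded N) :
    M.langST.IsRegular :=
  hN.langST_eq ▸ (M.windowDFA N).isRegular_accepts_of_finite_range_eval
    (M.finite_range_windowDFA_eval N)

end TuringMachine

/-- If the machine is bounded-zigzag (for some N, no left or right zigzag of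
width greater than N), then the language of the trace subshift S_T is
recognized by a deterministic pushdown automaton. -/
theorem langST_DPDA_of_bounded_zigzag
    {A Q : Type*} [Fintype A] [Fintype Q]
    (M : TuringMachine A Q)
    (hzz : ∃ N : ℕ, ∀ (x : TuringMachine.Config A Q) (i : ℤ) (W t₁ t₂ : ℕ),
      N < W → 0 < t₁ → t₁ < t₂ → x.2.2 = i →
      (M.pos t₁ x = i + W ∨ M.pos t₁ x = i - W) → M.pos t₂ x ≠ i) :
    ∃ P : DPDA (A × Q), P.accepts = M.langST := by
  obtain ⟨N, hN⟩ := hzz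
  exact (TuringMachine.ZigzagBounded.isRegular_langST (N := N) hN).exists_dpda_accepts_eq
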